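/- arXiv:1907.06603 — 2 statements merged into one kernel-verified Lean document; each statement's English description precedes it below -/
import Mathlib

section
/- Let R be a commutative ring and F ∈ R⟨⟨e₀,…,eₙ⟩⟩. Then the abelianisation of Fⱼ equals Σ_{m₀,…,mₙ ≥ 0} F( [e₀^{⧢m₀} ⧢ ⋯ ⧢ eₙ^{⧢mₙ}] eⱼ ) · (s₀^{m₀}/m₀!) ⋯ (sₙ^{mₙ}/mₙ!), where ⧢ denotes the shuffle product, F(w) denotes the (linearly extended) coefficient of words w in F, and [w]eⱼ denotes right-concatenation of eⱼ. -/
/-!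
Over disjoint alphabets the shuffle product has no multiplicities: a word occurs in `u ⧢ v`
at most once, namely when its letters from the alphabet of `u` spell `u` and the remaining ones
spell `v`. Together with `eᵢ^{⧢k} = k! eᵢᵏ` this shows that `e₀^{⧢d₀} ⧢ ⋯ ⧢ eₙ^{⧢dₙ}` contains
every word of multidegree `d` exactly `∏ dᵢ!` times and no other word, while the coefficient of
`s^d` in the abelianisation is the sum of `F` over the words of multidegree `d`.
-/

/-- The shuffle product of two words, as a multiset of words. -/
def shuffle {α : Type*} : List α → List α → Multiset (List α)
  | [], v => {v}
  | u, [] => {u}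
  | a :: u, b :: v =>
      ((shuffle u (b :: v)).map fun w => a :: w) + ((shuffle (a :: u) v).map fun w => b :: w)
  termination_by u v => u.length + v.length

/-- Shuffle product, extended bilinearly to (multisets of) words. -/
def mshuffle {α : Type*} (s t : Multiset (List α)) : Multiset (List α) :=
  s.bind fun u => t.bind fun v => shuffle u v

/-- The `m`-th shuffle power `u^{⧢m}` of a word `u`. -/
def shufflePow {α : Type*} (u : List α) : ℕ → Multiset (List α)
  | 0 => {[]}
  | k + 1 => mshuffle {u} (shufflePow u k)

/-- The linear combination of words `e₀^{⧢m₀} ⧢ ⋯ ⧢ e_{m-1}^{⧢m_{m-1}}` attached to a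
monomial `d`. -/
def bigShuffle {m : ℕ} (d : Fin m →₀ ℕ) : Multiset (List (Fin m)) :=
  (List.finRange m).foldr (fun i acc => mshuffle (shufflePow [i] (d i)) acc) {[]}

/-- The abelianisation of a noncommutative formal power series. -/
noncomputable def abel {R : Type*} [CommRing R] {m : ℕ} (F : List (Fin m) → R) :
    MvPowerSeries (Fin m) R :=
  fun d : Fin m →₀ ℕ =>
    ∑ g : Fin (d.sum fun _ k => k) → Fin m,
      if ∀ i, (List.ofFn g).count i = d i then F (List.ofFn g) else 0

lemma shuffle_nil_left {α : Type*} (v : List α) : shuffle [] v = {v} := by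
  cases v <;> simp [shuffle]

lemma shuffle_nil_right {α : Type*} (u : List α) : shuffle u [] = {u} := by
  cases u <;> simp [shuffle]

lemma shuffle_cons_cons {α : Type*} (a b : α) (u v : List α) :
    shuffle (a :: u) (b :: v) =
      ((shuffle u (b :: v)).map (a :: ·)) + ((shuffle (a :: u) v).map (b :: ·)) := by
  rw [shuffle]

lemma count_cons_map_cons {α : Type*} [DecidableEq α] (c a : α) (w : List α)
    (s : Multiset (List α)) :
    (s.map (a :: ·)).count (c :: w) = if c = a then s.count w else 0 := by
  split_ifs with hca
  · subst hca
    exact Multiset.count_map_eq_count' _ _ List.cons_injective _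
  · simp [Ne.symm hca]

lemma filter_eq_nil_and_filter_not_eq_iff {α : Type*} (p : α → Bool) {v : List α}
    (hv : ∀ x ∈ v, p x = false) (w : List α) :
    w.filter p = [] ∧ w.filter (! p ·) = v ↔ w = v := by
  constructor
  · rintro ⟨hp, hnp⟩
    rw [← hnp, eq_comm, List.filter_eq_self]
    simpa [List.filter_eq_nil_iff] using hp
  · rintro rfl
    simp_all [List.filter_eq_nil_iff, List.filter_eq_self]

lemma filter_eq_and_filter_not_eq_nil_iff {α : Type*} (p : α → Bool) {u : List α}
    (hu : ∀ x ∈ u, p x) (w : List α) :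
    w.filter p = u ∧ w.filter (! p ·) = [] ↔ w = u := by
  simpa [and_comm] using filter_eq_nil_and_filter_not_eq_iff (! p ·) (by simpa using hu) w

lemma count_shuffle_of_disjoint {α : Type*} [DecidableEq α] (p : α → Bool) {u v : List α}
    (hu : ∀ x ∈ u, p x) (hv : ∀ x ∈ v, p x = false) (w : List α) :
    (shuffle u v).count w = if w.filter p = u ∧ w.filter (! p ·) = v then 1 else 0 := by
  induction w generalizing u v with
  | nil =>
    rcases u with _ | ⟨a, u⟩ <;> rcases v with _ | ⟨b, v⟩ <;>
      simp [shuffle_nil_left, shuffle_nil_right, shuffle_cons_cons]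
  | cons c w ih =>
    rcases u with _ | ⟨a, u⟩
    · simp only [shuffle_nil_left, Multiset.count_singleton,
        filter_eq_nil_and_filter_not_eq_iff p hv]
    rcases v with _ | ⟨b, v⟩
    · simp only [shuffle_nil_right, Multiset.count_singleton,
        filter_eq_and_filter_not_eq_nil_iff p hu]
    simp only [List.mem_cons, forall_eq_or_imp] at hu hv
    rw [shuffle_cons_cons, Multiset.count_add, count_cons_map_cons, count_cons_map_cons,
      ih hu.2 (by simpa using hv), ih (by simpa using hu) hv.2]
    by_cases hc : p c
    · have hcb : c ≠ b := by rintro rfl; simp_all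
      rcases eq_or_ne c a with rfl | hca
      · simp [hc, hcb]
      · simp [hc, hcb, hca]
    · have hca : c ≠ a := by rintro rfl; simp_all
      rcases eq_or_ne c b with rfl | hcb
      · simp [hc, hca]
      · simp [hc, hca, hcb]

lemma Multiset.nsmul_bind {α β : Type*} (n : ℕ) (s : Multiset α) (f : α → Multiset β) :
    (n • s).bind f = n • s.bind f := by
  induction n with
  | zero => simp
  | succ n ih => rw [succ_nsmul, succ_nsmul, Multiset.add_bind, ih]

lemma shuffle_singleton_replicate {α : Type*} (a : α) (k : ℕ) :
    shuffle [a] (List.replicate k a) = (k + 1) • {List.replicate (k + 1) a} := by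
  induction k with
  | zero => simp [shuffle_nil_right]
  | succ k ih =>
    rw [List.replicate_succ, shuffle_cons_cons, shuffle_nil_left, ih, Multiset.map_nsmul]
    simp only [Multiset.map_singleton, ← List.replicate_succ]
    rw [add_comm, ← succ_nsmul]

lemma shufflePow_singleton {α : Type*} (a : α) (k : ℕ) :
    shufflePow [a] k = k.factorial • {List.replicate k a} := by
  induction k with
  | zero => simp [shufflePow]
  | succ k ih =>
    rw [shufflePow, ih, mshuffle, Multiset.singleton_bind, Multiset.nsmul_bind,
      Multiset.singleton_bind, shuffle_singleton_replicate, Nat.factorial_succ, mul_smul,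
      smul_comm]

lemma count_filter_ne {α : Type*} [DecidableEq α] (a i : α) (w : List α) :
    (w.filter (· ≠ a)).count i = if i = a then 0 else w.count i := by
  split_ifs with hia
  · simp [List.count_eq_zero, hia]
  · exact List.count_filter (by simpa using hia)

open scoped Classical in
lemma count_foldr_mshuffle_shufflePow {α : Type*} [DecidableEq α] (d : α → ℕ) {L : List α}
    (hL : L.Nodup) (w : List α) :
    (L.foldr (fun i acc => mshuffle (shufflePow [i] (d i)) acc) {[]}).count w =
      if ∀ i, w.count i = if i ∈ L then d i else 0 then (L.map fun i => (d i).factorial).prod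
      else 0 := by
  induction L generalizing w with
  | nil => simp [Multiset.count_singleton, List.eq_nil_iff_forall_not_mem, List.count_eq_zero]
  | cons a L ih =>
    obtain ⟨haL, hL⟩ := List.nodup_cons.1 hL
    set acc := L.foldr (fun i acc => mshuffle (shufflePow [i] (d i)) acc) {[]}
    have hshuffle : ∀ v ∈ acc, (shuffle (List.replicate (d a) a) v).count w =
        if w.count a = d a then ({v} : Multiset (List α)).count (w.filter (· ≠ a)) else 0 := by
      intro v hv
      have ha : a ∉ v := by
        have := Multiset.count_ne_zero.2 hv
        rw [ih hL, ite_ne_right_iff] at this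
        rw [← List.count_eq_zero, this.1 a, if_neg haL]
      rw [count_shuffle_of_disjoint (· = a) (by simp [List.mem_replicate])
        (by simpa using fun x hx => ne_of_mem_of_not_mem hx ha), List.filter_eq]
      simp only [(List.replicate_left_injective a).eq_iff, decide_not, Multiset.count_singleton,
        ite_and]
    rw [List.foldr_cons, mshuffle, shufflePow_singleton, Multiset.nsmul_bind,
      Multiset.singleton_bind, Multiset.count_nsmul, Multiset.count_bind,
      Multiset.map_congr rfl hshuffle]
    by_cases hwa : w.count a = d a
    · have hcounts : (∀ i, (w.filter (· ≠ a)).count i = if i ∈ L then d i else 0) ↔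
          ∀ i, w.count i = if i ∈ a :: L then d i else 0 := by
        refine forall_congr' fun i => ?_
        rw [count_filter_ne]
        rcases eq_or_ne i a with rfl | hia
        · simp [hwa, haL]
        · simp [hia]
      simp only [hwa, if_true]
      rw [← Multiset.count_bind, Multiset.bind_singleton, Multiset.map_id', ih hL, hcounts]
      split_ifs <;> simp
    · rw [if_neg fun h => hwa (by simpa using h a)]
      simp [hwa]

lemma count_bigShuffle {m : ℕ} (d : Fin m →₀ ℕ) (w : List (Fin m)) :
    (bigShuffle d).count w = if ∀ i, w.count i = d i then ∏ i, (d i).factorial else 0 := by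
  simp [bigShuffle, count_foldr_mshuffle_shufflePow d (List.nodup_finRange m), Fin.prod_univ_def]

lemma mem_bigShuffle {m : ℕ} {d : Fin m →₀ ℕ} {w : List (Fin m)} :
    w ∈ bigShuffle d ↔ ∀ i, w.count i = d i := by
  rw [← Multiset.count_ne_zero, count_bigShuffle, ite_ne_right_iff,
    and_iff_left (Finset.prod_ne_zero_iff.2 fun i _ => Nat.factorial_ne_zero (d i))]

lemma length_eq_sum_count {α : Type*} [Fintype α] [DecidableEq α] (w : List α) :
    w.length = ∑ i, w.count i := by
  simpa using (Multiset.sum_count_eq_card (s := Finset.univ) (m := (w : Multiset α))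
    fun i _ => Finset.mem_univ i).symm

lemma coeff_abel {R : Type*} [CommRing R] {m : ℕ} (F : List (Fin m) → R) (d : Fin m →₀ ℕ)
    {S : Finset (List (Fin m))} (hS : ∀ w, w ∈ S ↔ ∀ i, w.count i = d i) :
    MvPowerSeries.coeff d (abel F) = ∑ w ∈ S, F w := by
  change ∑ g : Fin _ → Fin m, _ = _
  rw [← Finset.sum_filter]
  refine Finset.sum_nbij (fun g => List.ofFn g) (fun g hg => ?_) List.ofFn_injective.injOn
    (fun w hw => ?_) (fun _ _ => rfl)
  · simpa [hS] using hg
  · have hlen : w.length = d.sum fun _ k => k := by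
      rw [length_eq_sum_count, Finsupp.sum_fintype _ _ fun _ => rfl]
      exact Finset.sum_congr rfl fun i _ => (hS w).1 hw i
    have hofFn : List.ofFn (fun k => w.get (Fin.cast hlen.symm k)) = w := by
      apply List.ext_get <;> simp [hlen]
    refine ⟨_, ?_, hofFn⟩
    rw [Finset.mem_coe, Finset.mem_filter, hofFn]
    exact ⟨Finset.mem_univ _, (hS w).1 hw⟩

lemma Multiset.sum_map_eq_nsmul_sum_toFinset {α M : Type*} [DecidableEq α] [AddCommMonoid M]
    {s : Multiset α} {c : ℕ} (hs : ∀ x ∈ s, s.count x = c) (f : α → M) :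
    (s.map f).sum = c • ∑ x ∈ s.toFinset, f x := by
  rw [Finset.sum_multiset_map_count, Finset.smul_sum]
  exact Finset.sum_congr rfl fun x hx => by rw [hs x (Multiset.mem_toFinset.1 hx)]

/-- the abelianisation of `Fⱼ` equals
`Σ_{m₀,…,mₙ} F([e₀^{⧢m₀} ⧢ ⋯ ⧢ eₙ^{⧢mₙ}]eⱼ) · s₀^{m₀}/m₀! ⋯ sₙ^{mₙ}/mₙ!`,
stated coefficientwise: the coefficient of `abel Fⱼ` at a monomial `d` is
`(∏ᵢ 1/dᵢ!) · F((e₀^{⧢d₀} ⧢ ⋯ ⧢ eₙ^{⧢dₙ})eⱼ)` with `F` extended linearly. -/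
theorem stmt11 {R : Type*} [CommRing R] [Algebra ℚ R] {n : ℕ}
    (F : List (Fin (n + 1)) → R) (j : Fin (n + 1)) :
    ∀ d : Fin (n + 1) →₀ ℕ,
      MvPowerSeries.coeff d (abel fun w => F (w ++ [j])) =
        (∏ i : Fin (n + 1), algebraMap ℚ R (((d i).factorial : ℚ))⁻¹) *
          ((bigShuffle d).map fun w => F (w ++ [j])).sum := by
  intro d
  have hcount : ∀ w ∈ bigShuffle d, (bigShuffle d).count w = ∏ i, (d i).factorial :=
    fun w hw => by rw [count_bigShuffle, if_pos (mem_bigShuffle.1 hw)]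
  rw [coeff_abel _ d fun w => by rw [Multiset.mem_toFinset, mem_bigShuffle],
    Multiset.sum_map_eq_nsmul_sum_toFinset hcount, nsmul_eq_mul, ← mul_assoc, Nat.cast_prod,
    ← Finset.prod_mul_distrib, Finset.prod_eq_one, one_mul]
  intro i _
  rw [← map_natCast (algebraMap ℚ R), ← map_mul, inv_mul_cancel₀ (by positivity), map_one]
end

section
/- For Re(c) > Re(b) > 0 and y ∈ ℂ with y ∉ [1,∞), the function 𝓕(a,b,c;y) = ∫₀¹ x^b (1−x)^{c−b}(1−yx)^{−a} dx/(x(1−x)) satisfies the contiguity relation 𝓕(a,b,c;y) = (c/(c−b))·𝓕(a,b,c+1;y) + (a/(c−b))·y·𝓕(a+1,b+1,c+2;y). -/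
/-! Integration by parts. The kernel `Φ(x) = x^b (1-x)^(c-b) (1-yx)^(-a)` vanishes at `0` and
`1` because `Re b > 0` and `Re (c-b) > 0`, and `Φ' = Φ · (b/x - (c-b)/(1-x) + ay/(1-yx))`.
Since `Φ/x` and `Φ/(1-yx)` are the integrands of `𝓕(a,b,c+1;y)` and `𝓕(a+1,b+1,c+2;y)`,
`Φ'` is `c`, resp. `ay`, times these, minus `(c-b)` times the integrand of `𝓕(a,b,c;y)`,
so integrating over `[0,1]` gives `(c-b) 𝓕(a,b,c;y) = c 𝓕(a,b,c+1;y) + ay 𝓕(a+1,b+1,c+2;y)`. -/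

/-- `𝓕(a,b,c;y) = ∫₀¹ x^b (1−x)^{c−b} (1−yx)^{−a} dx/(x(1−x))`, with principal branches
(which for `y ∉ [1,∞)` agree with the branches determined by
`log(1−yx) = ∫₀^x d log(1−yu)` along `(0,1)`). -/
noncomputable def calF (a b c y : ℂ) : ℂ :=
  ∫ x in (0:ℝ)..1,
    (x : ℂ) ^ b * (1 - (x : ℂ)) ^ (c - b) * (1 - y * (x : ℂ)) ^ (-a) /
      ((x : ℂ) * (1 - (x : ℂ)))

open MeasureTheory intervalIntegral Set Complex

noncomputable def calFKernel (a b c y : ℂ) (x : ℝ) : ℂ :=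
  (x : ℂ) ^ b * (1 - (x : ℂ)) ^ (c - b) * (1 - y * (x : ℂ)) ^ (-a)

noncomputable def calFIntegrand (a b c y : ℂ) (x : ℝ) : ℂ :=
  calFKernel a b c y x / ((x : ℂ) * (1 - (x : ℂ)))

lemma calF_eq_integral_calFIntegrand (a b c y : ℂ) :
    calF a b c y = ∫ x in (0:ℝ)..1, calFIntegrand a b c y x :=
  rfl

variable {a b c y : ℂ}

lemma one_sub_mul_ofReal_mem_slitPlane (hy : ∀ t : ℝ, 1 ≤ t → y ≠ (t : ℂ)) {x : ℝ}
    (hx : x ∈ Icc 0 1) : 1 - y * (x : ℂ) ∈ slitPlane := by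
  rcases hx.1.eq_or_lt with rfl | hx0
  · simp
  rw [mem_slitPlane_iff]
  by_contra! h
  obtain ⟨hre, him⟩ := h
  have hyim : y.im = 0 := by simpa [hx0.ne'] using him
  have hyre : 1 ≤ y.re := by
    simp only [sub_re, one_re, mul_re, ofReal_re, ofReal_im, mul_zero, sub_zero] at hre
    nlinarith [hx.2]
  exact hy y.re hyre (ext rfl hyim)

lemma continuousOn_one_sub_mul_ofReal_cpow (hy : ∀ t : ℝ, 1 ≤ t → y ≠ (t : ℂ)) (s : ℂ) :
    ContinuousOn (fun x : ℝ => (1 - y * (x : ℂ)) ^ s) (Icc 0 1) := fun _ hx =>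
  ((continuous_const.sub (continuous_const.mul continuous_ofReal)).continuousAt.cpow
    continuousAt_const (one_sub_mul_ofReal_mem_slitPlane hy hx)).continuousWithinAt

lemma continuousOn_calFKernel (hb : 0 < b.re) (hcb : 0 < (c - b).re)
    (hy : ∀ t : ℝ, 1 ≤ t → y ≠ (t : ℂ)) : ContinuousOn (calFKernel a b c y) (Icc 0 1) := by
  refine .mul (.mul (fun x hx => ?_) (fun x hx => ?_))
    (continuousOn_one_sub_mul_ofReal_cpow hy (-a))
  · exact ((continuousAt_cpow_const_of_re_pos (Or.inl (by simpa using hx.1)) hb).comp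
      continuous_ofReal.continuousAt).continuousWithinAt
  · exact ((continuousAt_cpow_const_of_re_pos (Or.inl (by simpa using hx.2)) hcb).comp
      (continuous_const.sub continuous_ofReal).continuousAt).continuousWithinAt

lemma calFKernel_zero (hb : b ≠ 0) : calFKernel a b c y 0 = 0 := by
  simp [calFKernel, zero_cpow hb]

lemma calFKernel_one (hcb : c - b ≠ 0) : calFKernel a b c y 1 = 0 := by
  simp [calFKernel, zero_cpow hcb]

lemma hasDerivAt_calFKernel (hy : ∀ t : ℝ, 1 ≤ t → y ≠ (t : ℂ)) {x : ℝ} (hx : x ∈ Ioo 0 1) :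
    HasDerivAt (calFKernel a b c y)
      (calFKernel a b c y x * (b / x - (c - b) / (1 - x) + a * y / (1 - y * x))) x := by
  have hxs : (x : ℂ) ∈ slitPlane := ofReal_mem_slitPlane.2 hx.1
  have hts : 1 - (x : ℂ) ∈ slitPlane := by
    exact_mod_cast ofReal_mem_slitPlane.2 (sub_pos.2 hx.2)
  have hus := one_sub_mul_ofReal_mem_slitPlane hy (Ioo_subset_Icc_self hx)
  have d₁ := ((hasDerivAt_id (x : ℂ)).cpow_const (c := b) hxs).comp_ofReal
  have d₂ := (((hasDerivAt_id (x : ℂ)).const_sub 1).cpow_const (c := c - b) hts).comp_ofReal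
  have d₃ := ((((hasDerivAt_id (x : ℂ)).const_mul y).const_sub 1).cpow_const
    (c := -a) hus).comp_ofReal
  refine ((d₁.mul d₂).mul d₃).congr_deriv ?_
  simp only [calFKernel, Pi.mul_apply, id, cpow_sub b 1 (slitPlane_ne_zero hxs),
    cpow_sub (c - b) 1 (slitPlane_ne_zero hts), cpow_sub (-a) 1 (slitPlane_ne_zero hus), cpow_one]
  field_simp [slitPlane_ne_zero hxs, slitPlane_ne_zero hts, slitPlane_ne_zero hus]
  ring

lemma ofReal_ne_zero_and_one_sub_ne_zero {x : ℝ} (hx : x ∈ Ioo 0 1) :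
    (x : ℂ) ≠ 0 ∧ 1 - (x : ℂ) ≠ 0 :=
  ⟨ofReal_ne_zero.2 hx.1.ne', by exact_mod_cast (sub_pos.2 hx.2).ne'⟩

lemma calFIntegrand_eq_mul {x : ℝ} (hx : x ∈ Ioo 0 1) :
    calFIntegrand a b c y x =
      (x : ℂ) ^ (b - 1) * (1 - (x : ℂ)) ^ (c - b - 1) * (1 - y * (x : ℂ)) ^ (-a) := by
  obtain ⟨hX, hT⟩ := ofReal_ne_zero_and_one_sub_ne_zero hx
  rw [calFIntegrand, calFKernel, cpow_sub b 1 hX, cpow_sub (c - b) 1 hT, cpow_one, cpow_one]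
  field_simp

lemma intervalIntegrable_calFIntegrand (hb : 0 < b.re) (hbc : b.re < c.re)
    (hy : ∀ t : ℝ, 1 ≤ t → y ≠ (t : ℂ)) :
    IntervalIntegrable (calFIntegrand a b c y) volume 0 1 := by
  have hcb : 0 < (c - b).re := by rw [sub_re]; linarith
  have hbeta := (betaIntegral_convergent hb hcb).mul_continuousOn
    (by rw [uIcc_of_le zero_le_one]; exact continuousOn_one_sub_mul_ofReal_cpow hy (-a))
  refine hbeta.congr_uIoo fun x hx => ?_
  rw [uIoo_of_le zero_le_one] at hx
  exact (calFIntegrand_eq_mul hx).symm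

lemma calFIntegrand_add_one_right {x : ℝ} (hx : x ∈ Ioo 0 1) :
    calFIntegrand a b (c + 1) y x = calFKernel a b c y x / x := by
  obtain ⟨hX, hT⟩ := ofReal_ne_zero_and_one_sub_ne_zero hx
  rw [calFIntegrand, calFKernel, calFKernel, add_sub_right_comm, cpow_add _ _ hT, cpow_one]
  field_simp

lemma calFIntegrand_add_one_add_one_add_two (hy : ∀ t : ℝ, 1 ≤ t → y ≠ (t : ℂ)) {x : ℝ}
    (hx : x ∈ Ioo 0 1) :
    calFIntegrand (a + 1) (b + 1) (c + 2) y x = calFKernel a b c y x / (1 - y * x) := by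
  obtain ⟨hX, hT⟩ := ofReal_ne_zero_and_one_sub_ne_zero hx
  have hU := slitPlane_ne_zero (one_sub_mul_ofReal_mem_slitPlane hy (Ioo_subset_Icc_self hx))
  rw [calFIntegrand, calFKernel, calFKernel, show c + 2 - (b + 1) = c - b + 1 by ring,
    neg_add, cpow_add _ _ hX, cpow_add _ _ hT, cpow_add _ _ hU, cpow_one, cpow_one, cpow_neg_one]
  field_simp

lemma hasDerivAt_calFKernel_contiguous (hy : ∀ t : ℝ, 1 ≤ t → y ≠ (t : ℂ)) {x : ℝ}
    (hx : x ∈ Ioo 0 1) :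
    HasDerivAt (calFKernel a b c y)
      (c * calFIntegrand a b (c + 1) y x + a * y * calFIntegrand (a + 1) (b + 1) (c + 2) y x -
        (c - b) * calFIntegrand a b c y x) x := by
  refine (hasDerivAt_calFKernel hy hx).congr_deriv ?_
  obtain ⟨hX, hT⟩ := ofReal_ne_zero_and_one_sub_ne_zero hx
  have hU := slitPlane_ne_zero (one_sub_mul_ofReal_mem_slitPlane hy (Ioo_subset_Icc_self hx))
  rw [calFIntegrand_add_one_right hx, calFIntegrand_add_one_add_one_add_two hy hx, calFIntegrand]
  field_simp
  ring

theorem sub_mul_calF_eq (hb : 0 < b.re) (hbc : b.re < c.re)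
    (hy : ∀ t : ℝ, 1 ≤ t → y ≠ (t : ℂ)) :
    (c - b) * calF a b c y = c * calF a b (c + 1) y + a * y * calF (a + 1) (b + 1) (c + 2) y := by
  have hcb : 0 < (c - b).re := by rw [sub_re]; linarith
  have hI₀ := (intervalIntegrable_calFIntegrand (a := a) hb hbc hy).const_mul (c - b)
  have hI₁ := (intervalIntegrable_calFIntegrand (a := a) (c := c + 1) hb
    (by simp; linarith) hy).const_mul c
  have hI₂ := (intervalIntegrable_calFIntegrand (a := a + 1) (b := b + 1) (c := c + 2)
    (by simp; linarith) (by simp; linarith) hy).const_mul (a * y)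
  have hFTC := integral_eq_sub_of_hasDerivAt_of_le zero_le_one (continuousOn_calFKernel hb hcb hy)
    (fun x hx => hasDerivAt_calFKernel_contiguous hy hx) ((hI₁.add hI₂).sub hI₀)
  rw [calFKernel_one (fun h => by simp [h] at hcb), calFKernel_zero (fun h => by simp [h] at hb),
    integral_sub (hI₁.add hI₂) hI₀, integral_add hI₁ hI₂, intervalIntegral.integral_const_mul,
    intervalIntegral.integral_const_mul, intervalIntegral.integral_const_mul, sub_zero,
    sub_eq_zero] at hFTC
  simp only [calF_eq_integral_calFIntegrand]
  exact hFTC.symm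

/-- for `Re(c) > Re(b) > 0` and `y ∉ [1,∞)`,
`𝓕(a,b,c;y) = (c/(c−b))·𝓕(a,b,c+1;y) + (a/(c−b))·y·𝓕(a+1,b+1,c+2;y)`. -/
theorem stmt14 (a b c y : ℂ) (hb : 0 < b.re) (hbc : b.re < c.re)
    (hy : ∀ t : ℝ, 1 ≤ t → y ≠ (t : ℂ)) :
    calF a b c y =
      c / (c - b) * calF a b (c + 1) y + a / (c - b) * y * calF (a + 1) (b + 1) (c + 2) y := by
  have hcb : c - b ≠ 0 := fun h => by simp [sub_eq_zero.1 h] at hbc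
  field_simp
  linear_combination sub_mul_calF_eq (a := a) hb hbc hy
end
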